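/- Let d ≥ 1 be an integer, let α, b > 0 be real numbers, let x ∈ ℝ^d with x ≠ 0, and let u : ℝ^d → ℂ be differentiable at x with u(x) ≠ 0. Define N(u)(y) := ‖y‖^{-b} |u(y)|^α u(y) and the momentum bracket {f,g}_p := Re( f ∇\overline{g} − g ∇\overline{f} ). Then, pointwise at x, {N(u), u}_p = −(α/(α+2)) ∇( ‖·‖^{-b} |u|^{α+2} )(x) − (2/(α+2)) ∇(‖·‖^{-b})(x) |u(x)|^{α+2}. -/

import Mathlib

/-!
Write `N(u) = G u` with the real factor `G = ‖·‖^{-b} |u|^α`. Since `G` is real,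
`{G u, u}_p = -|u|² ∇G`: the terms carrying `∇u` cancel. The identity then reduces to the
product and power rules for `‖·‖^{-b} |u|^p` at `p = α` and `p = α + 2`, using
`|u|² · |u|^{α-1} = |u|^{α+1}`.
-/

open ComplexConjugate

section

variable {E : Type*} [NormedAddCommGroup E] [NormedSpace ℝ E] {x : E}

/-- The `v`-component of the momentum bracket `{f, g}_p = Re (f ∇ḡ - g ∇f̄)` at `x`. -/
noncomputable def momentumBracket (f g : E → ℂ) (x v : E) : ℝ :=
  (f x * conj (fderiv ℝ g x v) - g x * fderiv ℝ (fun y => conj (f y)) x v).re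

theorem momentumBracket_ofReal_mul_self {G : E → ℝ} {u : E → ℂ}
    (hG : DifferentiableAt ℝ G x) (hu : DifferentiableAt ℝ u x) (v : E) :
    momentumBracket (fun y => (G y : ℂ) * u y) u x v = -(‖u x‖ ^ 2 * fderiv ℝ G x v) := by
  have hconj : HasFDerivAt (fun y => G y • star (u y))
      (G x • ((starL' ℝ : ℂ ≃L[ℝ] ℂ) : ℂ →L[ℝ] ℂ).comp (fderiv ℝ u x)
        + (fderiv ℝ G x).smulRight (star (u x))) x :=
    hG.hasFDerivAt.smul hu.hasFDerivAt.star
  have hfun : (fun y => conj ((G y : ℂ) * u y)) = fun y => G y • star (u y) := by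
    funext y
    simp [Complex.real_smul, Complex.conj_ofReal]
  have hnormSq : u x * conj (u x) = ((‖u x‖ ^ 2 : ℝ) : ℂ) := by
    rw [Complex.mul_conj, Complex.normSq_eq_norm_sq]
  unfold momentumBracket
  rw [hfun, hconj.fderiv]
  simp only [add_apply, smul_apply,
    ContinuousLinearMap.comp_apply, ContinuousLinearMap.smulRight_apply,
    ContinuousLinearEquiv.coe_coe, starL'_apply, Complex.real_smul, Complex.star_def]
  have hlin : (G x : ℂ) * u x * conj (fderiv ℝ u x v)
      - u x * ((G x : ℂ) * conj (fderiv ℝ u x v) + (fderiv ℝ G x v : ℂ) * conj (u x))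
      = ((-(‖u x‖ ^ 2 * fderiv ℝ G x v) : ℝ) : ℂ) := by
    push_cast at hnormSq ⊢
    linear_combination (-(fderiv ℝ G x v : ℂ)) * hnormSq
  rw [hlin, Complex.ofReal_re]

theorem fderiv_mul_rpow_apply {F m : E → ℝ} (hF : DifferentiableAt ℝ F x)
    (hm : DifferentiableAt ℝ m x) (hmx : m x ≠ 0) (p : ℝ) (v : E) :
    fderiv ℝ (fun y => F y * m y ^ p) x v
      = fderiv ℝ F x v * m x ^ p + F x * (p * m x ^ (p - 1) * fderiv ℝ m x v) := by
  have hderiv : HasFDerivAt (fun y => F y * m y ^ p) _ x :=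
    hF.hasFDerivAt.mul (hm.hasFDerivAt.rpow_const (Or.inl hmx))
  rw [hderiv.fderiv]
  simp only [add_apply, smul_apply, smul_eq_mul]
  ring

theorem sq_mul_fderiv_mul_rpow_apply {F m : E → ℝ} {α : ℝ} (hF : DifferentiableAt ℝ F x)
    (hm : DifferentiableAt ℝ m x) (hmx : 0 < m x) (hα : α + 2 ≠ 0) (v : E) :
    m x ^ 2 * fderiv ℝ (fun y => F y * m y ^ α) x v
      = α / (α + 2) * fderiv ℝ (fun y => F y * m y ^ (α + 2)) x v
        + 2 / (α + 2) * fderiv ℝ F x v * m x ^ (α + 2) := by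
  have hpow : m x ^ (α + 2) = m x ^ α * m x ^ 2 := by
    rw [Real.rpow_add hmx, Real.rpow_two]
  have hpow' : m x ^ (α + 2 - 1) = m x ^ (α - 1) * m x ^ 2 := by
    rw [show α + 2 - 1 = α - 1 + 2 by ring, Real.rpow_add hmx, Real.rpow_two]
  rw [fderiv_mul_rpow_apply hF hm hmx.ne', fderiv_mul_rpow_apply hF hm hmx.ne', hpow, hpow']
  field_simp
  ring

end

theorem stmt_10_general (d : ℕ) (α b : ℝ) (hα : 0 < α)
    (x : EuclideanSpace ℝ (Fin d)) (hx : x ≠ 0)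
    (u : EuclideanSpace ℝ (Fin d) → ℂ) (hu : DifferentiableAt ℝ u x) (hux : u x ≠ 0)
    (N : EuclideanSpace ℝ (Fin d) → ℂ)
    (hN : N = fun y => ((‖y‖ ^ (-b) * ‖u y‖ ^ α : ℝ) : ℂ) * u y) :
    ∀ j : Fin d,
      (N x * (starRingEnd ℂ) (fderiv ℝ u x (EuclideanSpace.single j 1))
          - u x * fderiv ℝ (fun y => (starRingEnd ℂ) (N y)) x (EuclideanSpace.single j 1)).re
        = -(α / (α + 2)) *
            fderiv ℝ (fun y => ‖y‖ ^ (-b) * ‖u y‖ ^ (α + 2)) x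
              (EuclideanSpace.single j 1)
          - (2 / (α + 2)) *
              fderiv ℝ (fun y : EuclideanSpace ℝ (Fin d) => ‖y‖ ^ (-b)) x
                (EuclideanSpace.single j 1) * ‖u x‖ ^ (α + 2) := by
  intro j
  subst hN
  have hweight : DifferentiableAt ℝ (fun y : EuclideanSpace ℝ (Fin d) => ‖y‖ ^ (-b)) x :=
    (differentiableAt_id.norm ℝ hx).rpow_const (Or.inl (norm_ne_zero_iff.mpr hx))
  have hmod : DifferentiableAt ℝ (fun y => ‖u y‖) x := hu.norm ℝ hux
  have hG : DifferentiableAt ℝ (fun y => ‖y‖ ^ (-b) * ‖u y‖ ^ α) x :=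
    hweight.mul (hmod.rpow_const (Or.inl (norm_ne_zero_iff.mpr hux)))
  change momentumBracket (fun y => ((‖y‖ ^ (-b) * ‖u y‖ ^ α : ℝ) : ℂ) * u y) u x _ = _
  rw [momentumBracket_ofReal_mul_self hG hu,
    sq_mul_fderiv_mul_rpow_apply hweight hmod (norm_pos_iff.mpr hux) (by linarith)]
  ring

theorem stmt_10 (d : ℕ) (hd : 1 ≤ d) (α b : ℝ) (hα : 0 < α) (hb : 0 < b)
    (x : EuclideanSpace ℝ (Fin d)) (hx : x ≠ 0)
    (u : EuclideanSpace ℝ (Fin d) → ℂ) (hu : DifferentiableAt ℝ u x) (hux : u x ≠ 0)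
    (N : EuclideanSpace ℝ (Fin d) → ℂ)
    (hN : N = fun y => ((‖y‖ ^ (-b) * ‖u y‖ ^ α : ℝ) : ℂ) * u y) :
    ∀ j : Fin d,
      (N x * (starRingEnd ℂ) (fderiv ℝ u x (EuclideanSpace.single j 1))
          - u x * fderiv ℝ (fun y => (starRingEnd ℂ) (N y)) x (EuclideanSpace.single j 1)).re
        = -(α / (α + 2)) *
            fderiv ℝ (fun y => ‖y‖ ^ (-b) * ‖u y‖ ^ (α + 2)) x
              (EuclideanSpace.single j 1)
          - (2 / (α + 2)) *
              fderiv ℝ (fun y : EuclideanSpace ℝ (Fin d) => ‖y‖ ^ (-b)) x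
                (EuclideanSpace.single j 1) * ‖u x‖ ^ (α + 2) :=
  stmt_10_general d α b hα x hx u hu hux N hN
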